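/- arXiv:1301.5034 — 3 statements merged into one kernel-verified Lean document; each statement's English description precedes it below -/
import Mathlib

section
/- Consider the coverage setup with a fixed assignment of antenna numbers M_n ≥ 2 to the base stations, the same locations x_n, powers P_n and SIR targets β_n for both systems. In the SU-BF system each base station serves one user, so Δ_n = M_n and Ψ_n = 1 for all n; in the SDMA system each base station serves Ψ'_n users with 1 < Ψ'_n ≤ M_n, so Δ'_n = M_n − Ψ'_n + 1. Then the coverage probability of the SU-BF system is greater than or equal to that of the SDMA system: P_c(Δ, Ψ) ≥ P_c(Δ', Ψ'). -/
/-!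
For integer shape `k ≥ 1` the law `Gamma(k, 1)` has the Erlang distribution function
`F_k(t) = 1 - e^{-t} ∑_{j<k} t^j / j!` on `[0, ∞)`, which is continuous, strictly increasing and
decreasing in `k`. Hence the quantile transform `F_l⁻¹ ∘ F_k` carries `Gamma(k, 1)` to
`Gamma(l, 1)` and lies below the identity when `l ≤ k`, above it when `k ≤ l`. Applying it to the
SU-BF fading (`h_n` from shape `M_n` to `M_n - Ψ'_n + 1`, `g_n` from shape `1` to `Ψ'_n`) realises
the SDMA fading on the SU-BF probability space: the transformed family is still independent with
the SDMA marginals, so it has the SDMA joint law and hence the SDMA coverage probability, while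
pointwise its signals are smaller and its interference larger, so every SIR decreases.
-/

open MeasureTheory ProbabilityTheory ENNReal

/-- Interference at the typical user from all base stations except `n`, valued in `[0,∞]`. -/
noncomputable def interference {Ω : Type*} (P : ℕ → ℝ) (x : ℕ → EuclideanSpace ℝ (Fin 2))
    (α : ℝ) (g : ℕ → Ω → ℝ) (n : ℕ) (ω : Ω) : ℝ≥0∞ :=
  ∑' m : ℕ, if m = n then 0 else ENNReal.ofReal (P m * g m ω * ‖x m‖ ^ (-α))

/-- SIR of base station `n` at the typical user, valued in `[0,∞]`
(it equals `0` when the interference is infinite). -/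
noncomputable def SIR {Ω : Type*} (P : ℕ → ℝ) (x : ℕ → EuclideanSpace ℝ (Fin 2))
    (α : ℝ) (h g : ℕ → Ω → ℝ) (n : ℕ) (ω : Ω) : ℝ≥0∞ :=
  ENNReal.ofReal (P n * h n ω * ‖x n‖ ^ (-α)) / interference P x α g n ω

open Real Set Filter Topology
open scoped Nat

noncomputable def erlangCDF (k : ℕ) (t : ℝ) : ℝ :=
  1 - exp (-t) * ∑ j ∈ Finset.range k, t ^ j / j !

lemma erlangCDF_succ (k : ℕ) (t : ℝ) :
    erlangCDF (k + 1) t = erlangCDF k t - exp (-t) * (t ^ k / k !) := by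
  simp only [erlangCDF, Finset.sum_range_succ]
  ring

lemma erlangCDF_apply_zero {k : ℕ} (hk : k ≠ 0) : erlangCDF k 0 = 0 := by
  obtain ⟨k, rfl⟩ := Nat.exists_eq_succ_of_ne_zero hk
  simp [erlangCDF, Finset.sum_range_succ']

lemma continuous_erlangCDF (k : ℕ) : Continuous (erlangCDF k) := by
  unfold erlangCDF
  fun_prop

lemma hasDerivAt_erlangCDF (k : ℕ) (t : ℝ) :
    HasDerivAt (erlangCDF (k + 1)) (t ^ k * exp (-t) / k !) t := by
  have hexp : HasDerivAt (fun t => exp (-t)) (-exp (-t)) t := by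
    simpa using (hasDerivAt_neg t).exp
  induction k with
  | zero => simpa [funext (erlangCDF_succ 0), erlangCDF] using hexp.const_sub 1
  | succ k ih =>
    have hterm := hexp.mul ((hasDerivAt_pow (k + 1) t).div_const ((k + 1)! : ℝ))
    rw [funext (erlangCDF_succ (k + 1))]
    refine (ih.sub hterm).congr_deriv ?_
    rw [Nat.factorial_succ]
    push_cast
    field_simp
    ring

lemma strictMonoOn_erlangCDF {k : ℕ} (hk : k ≠ 0) : StrictMonoOn (erlangCDF k) (Ici 0) := by
  obtain ⟨k, rfl⟩ := Nat.exists_eq_succ_of_ne_zero hk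
  refine strictMonoOn_of_deriv_pos (convex_Ici 0) (continuous_erlangCDF _).continuousOn
    fun t ht => ?_
  rw [interior_Ici, mem_Ioi] at ht
  rw [(hasDerivAt_erlangCDF k t).deriv]
  positivity

lemma antitone_erlangCDF {t : ℝ} (ht : 0 ≤ t) : Antitone fun k => erlangCDF k t :=
  antitone_nat_of_succ_le fun k => by
    rw [erlangCDF_succ]
    have : 0 ≤ exp (-t) * (t ^ k / k !) := by positivity
    linarith

lemma erlangCDF_lt_one {k : ℕ} (hk : k ≠ 0) {t : ℝ} (ht : 0 ≤ t) : erlangCDF k t < 1 := by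
  have hsum : 1 ≤ ∑ j ∈ Finset.range k, t ^ j / j ! := by
    simpa using Finset.single_le_sum (f := fun j => t ^ j / j !) (fun j _ => by positivity)
      (Finset.mem_range.mpr (Nat.pos_of_ne_zero hk))
  have : 0 < exp (-t) * ∑ j ∈ Finset.range k, t ^ j / j ! := by positivity
  rw [erlangCDF]
  linarith

lemma tendsto_erlangCDF_atTop (k : ℕ) : Tendsto (erlangCDF k) atTop (𝓝 1) := by
  have hsum : Tendsto (fun t => ∑ j ∈ Finset.range k, t ^ j * exp (-t) / j !) atTop (𝓝 0) := by
    simpa using tendsto_finsetSum (Finset.range k)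
      fun j _ => (tendsto_pow_mul_exp_neg_atTop_nhds_zero j).div_const (j ! : ℝ)
  convert tendsto_const_nhds.sub hsum using 2
  · rw [erlangCDF, Finset.mul_sum]
    congr 1
    exact Finset.sum_congr rfl fun j _ => by ring
  · simp

lemma mapsTo_erlangCDF {k : ℕ} (hk : k ≠ 0) : MapsTo (erlangCDF k) (Ici 0) (Ico 0 1) :=
  fun _ ht => ⟨erlangCDF_apply_zero hk ▸ (strictMonoOn_erlangCDF hk).monotoneOn self_mem_Ici ht ht,
    erlangCDF_lt_one hk ht⟩

lemma surjOn_erlangCDF {k : ℕ} (hk : k ≠ 0) : SurjOn (erlangCDF k) (Ici 0) (Ico 0 1) := by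
  rintro u ⟨hu0, hu1⟩
  obtain ⟨T, hT, hT0⟩ :=
    (((tendsto_erlangCDF_atTop k).eventually (eventually_gt_nhds hu1)).and
      (eventually_ge_atTop 0)).exists
  obtain ⟨t, ht, rfl⟩ := intermediate_value_Icc hT0 (continuous_erlangCDF k).continuousOn
    ⟨(erlangCDF_apply_zero hk).symm ▸ hu0, hT.le⟩
  exact ⟨t, ht.1, rfl⟩

lemma gammaMeasure_ne_zero {a r : ℝ} (ha : 0 < a) (hr : 0 < r) : gammaMeasure a r ≠ 0 :=
  have := isProbabilityMeasure_gammaMeasure ha hr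
  IsProbabilityMeasure.ne_zero _

lemma gammaMeasure_Iic_of_neg (a r : ℝ) {t : ℝ} (ht : t < 0) : gammaMeasure a r (Iic t) = 0 :=
  measure_mono_null (Iic_subset_Iio.mpr ht) <| by
    rw [gammaMeasure, withDensity_apply _ measurableSet_Iio, lintegral_gammaPDF_of_nonpos le_rfl]

lemma gammaMeasure_Iic {k : ℕ} (hk : k ≠ 0) {t : ℝ} (ht : 0 ≤ t) :
    gammaMeasure k 1 (Iic t) = ENNReal.ofReal (erlangCDF k t) := by
  obtain ⟨k, rfl⟩ := Nat.exists_eq_succ_of_ne_zero hk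
  have hpdf : EqOn (gammaPDF (k + 1 : ℕ) 1) (fun y => ENNReal.ofReal (y ^ k * exp (-y) / k !))
      (Icc 0 t) := fun y hy => by
    rw [gammaPDF_of_nonneg hy.1]
    push_cast
    simp [Real.Gamma_nat_eq_factorial, ← Real.rpow_natCast]
    ring_nf
  have hcont : Continuous fun y : ℝ => y ^ k * exp (-y) / k ! := by fun_prop
  rw [gammaMeasure, withDensity_apply _ measurableSet_Iic,
    lintegral_Iic_eq_lintegral_Iio_add_Icc _ ht, lintegral_gammaPDF_of_nonpos le_rfl, zero_add,
    setLIntegral_congr_fun measurableSet_Icc hpdf, ← ofReal_integral_eq_lintegral_ofReal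
      hcont.integrableOn_Icc (ae_restrict_of_forall_mem measurableSet_Icc
        fun y hy => by have := hy.1; positivity),
    integral_Icc_eq_integral_Ioc, ← intervalIntegral.integral_of_le ht,
    intervalIntegral.integral_eq_sub_of_hasDerivAt (fun y _ => hasDerivAt_erlangCDF k y)
      (hcont.intervalIntegrable 0 t),
    erlangCDF_apply_zero k.succ_ne_zero, sub_zero]

/-- Meaningful on `[0, 1)`, where it inverts `erlangCDF k` on `[0, ∞)`. -/
noncomputable def erlangQuantile (k : ℕ) : ℝ → ℝ := Function.invFunOn (erlangCDF k) (Ici 0)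

section Quantile

variable {k : ℕ} {u : ℝ}

lemma erlangQuantile_nonneg (hk : k ≠ 0) (hu : u ∈ Ico 0 1) : 0 ≤ erlangQuantile k u :=
  Function.invFunOn_mem (surjOn_erlangCDF hk hu)

lemma erlangCDF_erlangQuantile (hk : k ≠ 0) (hu : u ∈ Ico 0 1) :
    erlangCDF k (erlangQuantile k u) = u :=
  Function.invFunOn_eq (surjOn_erlangCDF hk hu)

lemma erlangQuantile_le_iff (hk : k ≠ 0) (hu : u ∈ Ico 0 1) {t : ℝ} (ht : 0 ≤ t) :
    erlangQuantile k u ≤ t ↔ u ≤ erlangCDF k t := by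
  conv_rhs => rw [← erlangCDF_erlangQuantile hk hu]
  exact ((strictMonoOn_erlangCDF hk).le_iff_le (erlangQuantile_nonneg hk hu) ht).symm

lemma le_erlangQuantile_iff (hk : k ≠ 0) (hu : u ∈ Ico 0 1) {t : ℝ} (ht : 0 ≤ t) :
    t ≤ erlangQuantile k u ↔ erlangCDF k t ≤ u := by
  conv_rhs => rw [← erlangCDF_erlangQuantile hk hu]
  exact ((strictMonoOn_erlangCDF hk).le_iff_le ht (erlangQuantile_nonneg hk hu)).symm

end Quantile

/-- Identity on the null set `(-∞, 0]`, so that the comparisons with the identity hold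
everywhere. -/
noncomputable def erlangCoupling (k l : ℕ) (x : ℝ) : ℝ :=
  if x ≤ 0 then x else erlangQuantile l (erlangCDF k x)

section Coupling

variable {k l : ℕ}

lemma erlangCoupling_le_iff (hk : k ≠ 0) (hl : l ≠ 0) {x t : ℝ} (hx : 0 < x) (ht : 0 ≤ t) :
    erlangCoupling k l x ≤ t ↔ erlangCDF k x ≤ erlangCDF l t := by
  rw [erlangCoupling, if_neg hx.not_ge, erlangQuantile_le_iff hl (mapsTo_erlangCDF hk hx.le) ht]

lemma le_erlangCoupling_iff (hk : k ≠ 0) (hl : l ≠ 0) {x t : ℝ} (hx : 0 < x) (ht : 0 ≤ t) :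
    t ≤ erlangCoupling k l x ↔ erlangCDF l t ≤ erlangCDF k x := by
  rw [erlangCoupling, if_neg hx.not_ge, le_erlangQuantile_iff hl (mapsTo_erlangCDF hk hx.le) ht]

lemma erlangCoupling_nonneg (hk : k ≠ 0) (hl : l ≠ 0) {x : ℝ} (hx : 0 < x) :
    0 ≤ erlangCoupling k l x := by
  rw [erlangCoupling, if_neg hx.not_ge]
  exact erlangQuantile_nonneg hl (mapsTo_erlangCDF hk hx.le)

lemma erlangCDF_erlangCoupling (hk : k ≠ 0) (hl : l ≠ 0) {x : ℝ} (hx : 0 < x) :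
    erlangCDF l (erlangCoupling k l x) = erlangCDF k x := by
  rw [erlangCoupling, if_neg hx.not_ge]
  exact erlangCDF_erlangQuantile hl (mapsTo_erlangCDF hk hx.le)

lemma monotone_erlangCoupling (hk : k ≠ 0) (hl : l ≠ 0) : Monotone (erlangCoupling k l) := by
  intro a b hab
  rcases le_or_gt b 0 with hb | hb
  · simp only [erlangCoupling, if_pos hb, if_pos (hab.trans hb), hab]
  rcases le_or_gt a 0 with ha | ha
  · rw [erlangCoupling, if_pos ha]
    exact ha.trans (erlangCoupling_nonneg hk hl hb)
  rw [erlangCoupling_le_iff hk hl ha (erlangCoupling_nonneg hk hl hb),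
    erlangCDF_erlangCoupling hk hl hb]
  exact (strictMonoOn_erlangCDF hk).monotoneOn ha.le hb.le hab

lemma measurable_erlangCoupling (hk : k ≠ 0) (hl : l ≠ 0) : Measurable (erlangCoupling k l) :=
  (monotone_erlangCoupling hk hl).measurable

lemma erlangCoupling_le_self (hk : k ≠ 0) (hl : l ≠ 0) (hlk : l ≤ k) (x : ℝ) :
    erlangCoupling k l x ≤ x := by
  rcases le_or_gt x 0 with hx | hx
  · rw [erlangCoupling, if_pos hx]
  · exact (erlangCoupling_le_iff hk hl hx hx.le).mpr (antitone_erlangCDF hx.le hlk)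

lemma le_erlangCoupling_self (hk : k ≠ 0) (hl : l ≠ 0) (hkl : k ≤ l) (x : ℝ) :
    x ≤ erlangCoupling k l x := by
  rcases le_or_gt x 0 with hx | hx
  · rw [erlangCoupling, if_pos hx]
  · exact (le_erlangCoupling_iff hk hl hx hx.le).mpr (antitone_erlangCDF hx.le hkl)

lemma preimage_erlangCoupling_Iic (hk : k ≠ 0) (hl : l ≠ 0) {t : ℝ} (ht : 0 ≤ t) :
    erlangCoupling k l ⁻¹' Iic t = Iic (erlangQuantile k (erlangCDF l t)) := by
  have hu := mapsTo_erlangCDF hl ht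
  ext y
  rcases le_or_gt y 0 with hy | hy
  · simp only [mem_preimage, mem_Iic, erlangCoupling, if_pos hy]
    exact iff_of_true (hy.trans ht) (hy.trans (erlangQuantile_nonneg hk hu))
  · rw [mem_preimage, mem_Iic, mem_Iic, erlangCoupling_le_iff hk hl hy ht,
      le_erlangQuantile_iff hk hu hy.le]

lemma preimage_erlangCoupling_Iic_of_neg (hk : k ≠ 0) (hl : l ≠ 0) {t : ℝ} (ht : t < 0) :
    erlangCoupling k l ⁻¹' Iic t = Iic t := by
  ext y
  rcases le_or_gt y 0 with hy | hy
  · simp only [mem_preimage, mem_Iic, erlangCoupling, if_pos hy]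
  · exact iff_of_false (fun h => ((erlangCoupling_nonneg hk hl hy).trans h).not_gt ht)
      fun h => (h.trans ht.le).not_gt hy

lemma map_erlangCoupling_gammaMeasure (hk : k ≠ 0) (hl : l ≠ 0) :
    (gammaMeasure k 1).map (erlangCoupling k l) = gammaMeasure l 1 := by
  have := isProbabilityMeasure_gammaMeasure (Nat.cast_pos.mpr hk.bot_lt) one_pos
  have := isProbabilityMeasure_gammaMeasure (Nat.cast_pos.mpr hl.bot_lt) one_pos
  have hmeas := measurable_erlangCoupling hk hl
  have := Measure.isProbabilityMeasure_map (μ := gammaMeasure k 1) hmeas.aemeasurable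
  refine Measure.ext_of_Iic _ _ fun t => ?_
  rw [Measure.map_apply hmeas measurableSet_Iic]
  rcases le_or_gt 0 t with ht | ht
  · have hu := mapsTo_erlangCDF hl ht
    rw [preimage_erlangCoupling_Iic hk hl ht, gammaMeasure_Iic hk (erlangQuantile_nonneg hk hu),
      erlangCDF_erlangQuantile hk hu, gammaMeasure_Iic hl ht]
  · rw [preimage_erlangCoupling_Iic_of_neg hk hl ht, gammaMeasure_Iic_of_neg _ _ ht,
      gammaMeasure_Iic_of_neg _ _ ht]

lemma map_erlangCoupling_comp {Ω : Type*} [MeasurableSpace Ω] {μ : Measure Ω} {X : Ω → ℝ}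
    (hk : k ≠ 0) (hl : l ≠ 0) (hX : μ.map X = gammaMeasure k 1) :
    μ.map (erlangCoupling k l ∘ X) = gammaMeasure l 1 := by
  have hXm : AEMeasurable X μ :=
    .of_map_ne_zero (hX ▸ gammaMeasure_ne_zero (Nat.cast_pos.mpr hk.bot_lt) one_pos)
  rw [← AEMeasurable.map_map_of_aemeasurable
    (measurable_erlangCoupling hk hl).aemeasurable hXm, hX,
    map_erlangCoupling_gammaMeasure hk hl]

end Coupling

section Coverage

variable (P : ℕ → ℝ) (x : ℕ → EuclideanSpace ℝ (Fin 2)) (α : ℝ)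

lemma measurable_interference {Ω : Type*} [MeasurableSpace Ω] {g : ℕ → Ω → ℝ}
    (hg : ∀ m, Measurable (g m)) (n : ℕ) : Measurable (interference P x α g n) :=
  Measurable.tsum fun m => by
    split_ifs
    · exact measurable_const
    · exact ((hg m).const_mul _).mul_const _ |>.ennreal_ofReal

lemma measurable_SIR {Ω : Type*} [MeasurableSpace Ω] {h g : ℕ → Ω → ℝ} {n : ℕ}
    (hh : Measurable (h n)) (hg : ∀ m, Measurable (g m)) : Measurable (SIR P x α h g n) :=
  (((hh.const_mul _).mul_const _).ennreal_ofReal).div (measurable_interference P x α hg n)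

variable {P} in
lemma SIR_le_SIR {Ω : Type*} (hP : ∀ m, 0 ≤ P m) {h₁ h₂ g₁ g₂ : ℕ → Ω → ℝ} {n : ℕ} {ω : Ω}
    (hh : h₁ n ω ≤ h₂ n ω) (hg : ∀ m, g₂ m ω ≤ g₁ m ω) :
    SIR P x α h₁ g₁ n ω ≤ SIR P x α h₂ g₂ n ω := by
  refine ENNReal.div_le_div (ENNReal.ofReal_le_ofReal (by gcongr; exact hP n))
    (ENNReal.tsum_le_tsum fun m => ?_)
  split_ifs
  · exact le_rfl
  · exact ENNReal.ofReal_le_ofReal (by gcongr; exacts [hP m, hg m])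

def coverageEvent (β : ℕ → ℝ) : Set (ℕ ⊕ ℕ → ℝ) :=
  {y | ∃ n, ENNReal.ofReal (β n) < SIR P x α (fun n y => y (.inl n)) (fun m y => y (.inr m)) n y}

lemma measurableSet_coverageEvent (β : ℕ → ℝ) : MeasurableSet (coverageEvent P x α β) := by
  simp only [coverageEvent, ofPred_exists]
  exact .iUnion fun n => measurableSet_lt measurable_const
    (measurable_SIR P x α (measurable_pi_apply _) fun m => measurable_pi_apply _)

lemma measure_coverage_eq_of_iIndepFun {Ω Ω' : Type*} [MeasurableSpace Ω] [MeasurableSpace Ω']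
    {μ : Measure Ω} {μ' : Measure Ω'} (β : ℕ → ℝ) {h g : ℕ → Ω → ℝ} {h' g' : ℕ → Ω' → ℝ}
    {ν : ℕ ⊕ ℕ → Measure ℝ} (hν : ∀ i, ν i ≠ 0)
    (hind : iIndepFun (Sum.elim h g) μ) (hind' : iIndepFun (Sum.elim h' g') μ')
    (hlaw : ∀ i, μ.map (Sum.elim h g i) = ν i) (hlaw' : ∀ i, μ'.map (Sum.elim h' g' i) = ν i) :
    μ {ω | ∃ n, ENNReal.ofReal (β n) < SIR P x α h g n ω} =
      μ' {ω | ∃ n, ENNReal.ofReal (β n) < SIR P x α h' g' n ω} := by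
  have hm i : AEMeasurable (Sum.elim h g i) μ := .of_map_ne_zero (hlaw i ▸ hν i)
  have hm' i : AEMeasurable (Sum.elim h' g' i) μ' := .of_map_ne_zero (hlaw' i ▸ hν i)
  have hS := measurableSet_coverageEvent P x α β
  change μ ((fun ω i => Sum.elim h g i ω) ⁻¹' coverageEvent P x α β) =
    μ' ((fun ω i => Sum.elim h' g' i ω) ⁻¹' coverageEvent P x α β)
  rw [← Measure.map_apply_of_aemeasurable (aemeasurable_pi_iff.2 hm) hS,
    ← Measure.map_apply_of_aemeasurable (aemeasurable_pi_iff.2 hm') hS,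
    hind.map_fun_eq_infinitePi_map₀' hm, hind'.map_fun_eq_infinitePi_map₀' hm',
    funext hlaw, funext hlaw']

variable {P} in
lemma measure_coverage_le_of_coupling {Ω Ω' : Type*} [MeasurableSpace Ω] [MeasurableSpace Ω']
    {μ : Measure Ω} {μ' : Measure Ω'} (hP : ∀ m, 0 ≤ P m) (β : ℕ → ℝ)
    {h g : ℕ → Ω → ℝ} {h' g' : ℕ → Ω' → ℝ} {ρ τ : ℕ → ℝ → ℝ}
    (hρ : ∀ n, Measurable (ρ n)) (hτ : ∀ n, Measurable (τ n))
    (hρ_le : ∀ n y, ρ n y ≤ y) (hτ_ge : ∀ n y, y ≤ τ n y)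
    {ν : ℕ ⊕ ℕ → Measure ℝ} (hν : ∀ i, ν i ≠ 0)
    (hind : iIndepFun (Sum.elim h g) μ) (hind' : iIndepFun (Sum.elim h' g') μ')
    (hlaw : ∀ i, μ.map (Sum.elim (fun n => ρ n ∘ h n) (fun n => τ n ∘ g n) i) = ν i)
    (hlaw' : ∀ i, μ'.map (Sum.elim h' g' i) = ν i) :
    μ' {ω | ∃ n, ENNReal.ofReal (β n) < SIR P x α h' g' n ω} ≤
      μ {ω | ∃ n, ENNReal.ofReal (β n) < SIR P x α h g n ω} := by
  have hind_c : iIndepFun (Sum.elim (fun n => ρ n ∘ h n) (fun n => τ n ∘ g n)) μ := by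
    convert hind.comp (Sum.elim ρ τ) (by rintro (n | n); exacts [hρ n, hτ n]) using 1
    ext (n | n) <;> rfl
  rw [← measure_coverage_eq_of_iIndepFun P x α β hν hind_c hind' hlaw hlaw']
  exact measure_mono fun ω ⟨n, hn⟩ =>
    ⟨n, hn.trans_le <| SIR_le_SIR x α hP (hρ_le n _) fun m => hτ_ge m _⟩

end Coverage

theorem coverage_SUBF_ge_SDMA_general
    (α : ℝ)
    (x : ℕ → EuclideanSpace ℝ (Fin 2))
    (P : ℕ → ℝ) (hP : ∀ n, 0 < P n)
    (β : ℕ → ℝ)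
    (M : ℕ → ℕ)
    (Ψ' : ℕ → ℕ) (hΨ'lb : ∀ n, 1 < Ψ' n) (hΨ'ub : ∀ n, Ψ' n ≤ M n)
    {Ω : Type*} [MeasurableSpace Ω] (μ : Measure Ω)
    {Ω' : Type*} [MeasurableSpace Ω'] (μ' : Measure Ω')
    (h g : ℕ → Ω → ℝ) (h' g' : ℕ → Ω' → ℝ)
    (hindep : iIndepFun (Sum.elim h g) μ)
    (hindep' : iIndepFun (Sum.elim h' g') μ')
    (hhd : ∀ n, Measure.map (h n) μ = gammaMeasure (M n) 1)
    (hgd : ∀ n, Measure.map (g n) μ = gammaMeasure 1 1)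
    (hh'd : ∀ n, Measure.map (h' n) μ' = gammaMeasure (M n - Ψ' n + 1) 1)
    (hg'd : ∀ n, Measure.map (g' n) μ' = gammaMeasure (Ψ' n) 1) :
    μ' {ω | ∃ n : ℕ, ENNReal.ofReal (β n) < SIR P x α h' g' n ω} ≤
      μ {ω | ∃ n : ℕ, ENNReal.ofReal (β n) < SIR P x α h g n ω} := by
  have hΨ' (n : ℕ) : Ψ' n ≠ 0 := by have := hΨ'lb n; omega
  have hM (n : ℕ) : M n ≠ 0 := by have := hΨ'lb n; have := hΨ'ub n; omega
  let ν : ℕ ⊕ ℕ → Measure ℝ :=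
    Sum.elim (fun n => gammaMeasure (M n - Ψ' n + 1 : ℕ) 1) (fun n => gammaMeasure (Ψ' n) 1)
  have hν : ∀ i, ν i ≠ 0 := by
    rintro (n | n)
    · exact gammaMeasure_ne_zero (Nat.cast_pos.mpr (Nat.succ_pos _)) one_pos
    · exact gammaMeasure_ne_zero (Nat.cast_pos.mpr (hΨ' n).bot_lt) one_pos
  have hlaw' : ∀ i, μ'.map (Sum.elim h' g' i) = ν i := by
    rintro (n | n)
    · simp [hh'd, ν, Nat.cast_sub (hΨ'ub n)]
    · exact hg'd n
  -- realise the SDMA fading on `Ω` by quantile coupling with the SU-BF fading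
  refine measure_coverage_le_of_coupling x α (fun m => (hP m).le) β
    (fun n => measurable_erlangCoupling (hM n) (M n - Ψ' n).succ_ne_zero)
    (fun n => measurable_erlangCoupling one_ne_zero (hΨ' n))
    (fun n => erlangCoupling_le_self (hM n) (M n - Ψ' n).succ_ne_zero
      (by have := hΨ'lb n; have := hΨ'ub n; omega))
    (fun n => le_erlangCoupling_self one_ne_zero (hΨ' n) (hΨ'lb n).le) hν hindep hindep' ?_ hlaw'
  rintro (n | n)
  · exact map_erlangCoupling_comp (hM n) (Nat.succ_ne_zero _) (hhd n)
  · exact map_erlangCoupling_comp one_ne_zero (hΨ' n) (Nat.cast_one (R := ℝ) ▸ hgd n)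

/-- SU-BF (each base station with `M n` antennas serves one user, so `Δ n = M n`, `Ψ n = 1`)
has coverage probability at least that of SDMA (each base station serves `Ψ' n` users with
`1 < Ψ' n ≤ M n`, so `Δ' n = M n - Ψ' n + 1`). -/
theorem coverage_SUBF_ge_SDMA
    (α : ℝ) (hα : 2 < α)
    (x : ℕ → EuclideanSpace ℝ (Fin 2)) (hx : ∀ n, x n ≠ 0)
    (P : ℕ → ℝ) (hP : ∀ n, 0 < P n)
    (β : ℕ → ℝ) (hβ : ∀ n, 0 < β n)
    (M : ℕ → ℕ) (hM : ∀ n, 2 ≤ M n)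
    (Ψ' : ℕ → ℕ) (hΨ'lb : ∀ n, 1 < Ψ' n) (hΨ'ub : ∀ n, Ψ' n ≤ M n)
    {Ω : Type*} [MeasurableSpace Ω] (μ : Measure Ω) [IsProbabilityMeasure μ]
    {Ω' : Type*} [MeasurableSpace Ω'] (μ' : Measure Ω') [IsProbabilityMeasure μ']
    (h g : ℕ → Ω → ℝ) (h' g' : ℕ → Ω' → ℝ)
    (hhm : ∀ n, Measurable (h n)) (hgm : ∀ n, Measurable (g n))
    (hh'm : ∀ n, Measurable (h' n)) (hg'm : ∀ n, Measurable (g' n))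
    (hindep : iIndepFun (Sum.elim h g) μ)
    (hindep' : iIndepFun (Sum.elim h' g') μ')
    (hhd : ∀ n, Measure.map (h n) μ = gammaMeasure (M n) 1)
    (hgd : ∀ n, Measure.map (g n) μ = gammaMeasure 1 1)
    (hh'd : ∀ n, Measure.map (h' n) μ' = gammaMeasure (M n - Ψ' n + 1) 1)
    (hg'd : ∀ n, Measure.map (g' n) μ' = gammaMeasure (Ψ' n) 1) :
    μ' {ω | ∃ n : ℕ, ENNReal.ofReal (β n) < SIR P x α h' g' n ω} ≤
      μ {ω | ∃ n : ℕ, ENNReal.ofReal (β n) < SIR P x α h g n ω} :=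
  coverage_SUBF_ge_SDMA_general α x P hP β M Ψ' hΨ'lb hΨ'ub μ μ' h g h' g' hindep hindep' hhd hgd
    hh'd hg'd
end

section
/- Define the random number of covering base stations X(Δ, Ψ) = Σ_{n∈ℕ} 1(SIR_n > β_n), taking values in ℕ ∪ {∞}. Consider two parameter choices (Δ_n, Ψ_n)_{n∈ℕ} and (Δ'_n, Ψ'_n)_{n∈ℕ} using the same locations x_n, powers P_n and SIR targets β_n. If Δ_n ≥ Δ'_n and Ψ_n ≤ Ψ'_n for every n ∈ ℕ, then X(Δ, Ψ) stochastically dominates X(Δ', Ψ'): for every t ∈ ℕ, P(X(Δ, Ψ) > t) ≥ P(X(Δ', Ψ') > t). -/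
/-!
For an atomless law `ν'` and any law `ν` on `ℝ`, the quantile coupling `quantile ν ∘ cdf ν'`
pushes `ν'` forward to `ν`; it lies a.e. below the identity when `cdf ν' ≤ cdf ν` and a.e. above
it when `cdf ν ≤ cdf ν'`. Gamma laws increase stochastically with the shape, since
`cdf Γ(a) - cdf Γ(a + 1) = y ^ a e ^ (-y) / Γ(a + 1)`. Applying the coupling coordinatewise to the
independent primed fading yields, on the same space, an independent family with the unprimed laws
whose direct-link gains are larger and whose interfering gains are smaller. Every SIR, hence the
number of covering stations, can only grow; and since independence determines the joint law from
the marginals, the new count has the law of `numCovering … h g`.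
-/

open MeasureTheory ProbabilityTheory ENNReal

/-- The number of base stations whose SIR exceeds its target, valued in `[0,∞]`
(`ℕ ∪ {∞}` embedded in `ℝ≥0∞`). -/
noncomputable def numCovering {Ω : Type*} (P : ℕ → ℝ) (x : ℕ → EuclideanSpace ℝ (Fin 2))
    (α : ℝ) (β : ℕ → ℝ) (h g : ℕ → Ω → ℝ) (ω : Ω) : ℝ≥0∞ :=
  ∑' n : ℕ, Set.indicator {ω' | ENNReal.ofReal (β n) < SIR P x α h g n ω'}
    (fun _ => (1 : ℝ≥0∞)) ω

open Set Filter Topology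

namespace ProbabilityTheory

section Quantile

variable {ν : Measure ℝ} {p y c : ℝ}

/-- Only the values on `(0, 1)` are meaningful: elsewhere the set is unbounded below or may be
empty, and `sInf` returns the junk value `0`. -/
noncomputable def quantile (ν : Measure ℝ) (p : ℝ) : ℝ := sInf {y | p ≤ cdf ν y}

lemma quantile_le_iff (hp : p ∈ Ioo 0 1) : quantile ν p ≤ y ↔ p ≤ cdf ν y := by
  set S := {y | p ≤ cdf ν y}
  have hne : S.Nonempty :=
    ((tendsto_cdf_atTop ν).eventually (eventually_gt_nhds hp.2)).exists.imp fun _ h => h.le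
  obtain ⟨b, hb⟩ := eventually_atBot.1 ((tendsto_cdf_atBot ν).eventually (eventually_lt_nhds hp.1))
  have hbdd : BddBelow S := ⟨b, fun s hs => le_of_not_gt fun hsb => (hb s hsb.le).not_ge hs⟩
  have hmem : p ≤ cdf ν (sInf S) := by
    refine ge_of_tendsto (((cdf ν).right_continuous _).mono Ioi_subset_Ici_self)
      (eventually_nhdsWithin_of_forall fun z hz => ?_)
    obtain ⟨s, hs, hsz⟩ := exists_lt_of_csInf_lt hne hz
    exact hs.trans (monotone_cdf ν hsz.le)
  exact ⟨fun h => hmem.trans (monotone_cdf ν h), fun h => csInf_le hbdd h⟩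

lemma le_cdf_quantile (hp : p ∈ Ioo 0 1) : p ≤ cdf ν (quantile ν p) :=
  (quantile_le_iff hp).1 le_rfl

lemma monotoneOn_quantile : MonotoneOn (quantile ν) (Ioo 0 1) := fun _ hp _ hq hpq =>
  (quantile_le_iff hp).2 (hpq.trans (le_cdf_quantile hq))

lemma aemeasurable_quantile : AEMeasurable (quantile ν) (volume.restrict (Ioo 0 1)) :=
  (aemeasurable_restrict_iff_comap_subtype measurableSet_Ioo).2
    (Monotone.measurable fun (p q : Ioo (0 : ℝ) 1) hpq =>
      monotoneOn_quantile p.2 q.2 hpq).aemeasurable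

theorem map_quantile_volume_Ioo [IsProbabilityMeasure ν] :
    (volume.restrict (Ioo 0 1)).map (quantile ν) = ν := by
  have : IsProbabilityMeasure (volume.restrict (Ioo (0 : ℝ) 1)) := ⟨by simp⟩
  have : IsProbabilityMeasure ((volume.restrict (Ioo (0 : ℝ) 1)).map (quantile ν)) :=
    Measure.isProbabilityMeasure_map aemeasurable_quantile
  refine Measure.ext_of_Iic _ _ fun z => ?_
  rw [Measure.map_apply_of_aemeasurable aemeasurable_quantile measurableSet_Iic,
    Measure.restrict_apply' measurableSet_Ioo, ← ofReal_cdf]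
  have hsub : Ioo 0 (cdf ν z) ⊆ quantile ν ⁻¹' Iic z ∩ Ioo 0 1 := fun p hp =>
    have hp' : p ∈ Ioo 0 1 := ⟨hp.1, hp.2.trans_le (cdf_le_one ν z)⟩
    ⟨(quantile_le_iff hp').2 hp.2.le, hp'⟩
  have hsup : quantile ν ⁻¹' Iic z ∩ Ioo 0 1 ⊆ Ioc 0 (cdf ν z) := fun p ⟨h, hp⟩ =>
    ⟨hp.1, (quantile_le_iff hp).1 h⟩
  refine le_antisymm ((measure_mono hsup).trans_eq ?_) ((measure_mono hsub).trans_eq' ?_) <;>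
    simp

variable [IsProbabilityMeasure ν] [NullSingletonClass ν]

lemma continuous_cdf : Continuous (cdf ν) := by
  refine continuous_iff_continuousAt.2 fun a => continuousAt_iff_continuous_left_right.2
    ⟨continuousWithinAt_Iio_iff_Iic.1 ?_, (cdf ν).right_continuous a⟩
  have hatom := (cdf ν).measure_singleton a
  rw [measure_cdf, measure_singleton, eq_comm, ENNReal.ofReal_eq_zero, sub_nonpos] at hatom
  exact (monotone_cdf ν).continuousWithinAt_Iio_iff_leftLim_eq.2
    (le_antisymm ((monotone_cdf ν).leftLim_le le_rfl) hatom)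

lemma measure_setOf_cdf_le (hc : c ≤ 1) : ν {x | cdf ν x ≤ c} = ENNReal.ofReal c := by
  set S := {x | cdf ν x ≤ c}
  obtain rfl | hc := hc.eq_or_lt
  · simp [S, cdf_le_one]
  obtain ⟨b, hb⟩ := eventually_atTop.1 ((tendsto_cdf_atTop ν).eventually (eventually_gt_nhds hc))
  refine le_antisymm ?_ ?_
  · rcases S.eq_empty_or_nonempty with hS | hS
    · simp [hS]
    have hbdd : BddAbove S := ⟨b, fun x hx => le_of_not_gt fun hbx => (hb x hbx.le).not_ge hx⟩
    have hmem : sSup S ∈ S := (isClosed_Iic.preimage continuous_cdf).csSup_mem hS hbdd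
    calc ν S ≤ ν (Iic (sSup S)) := measure_mono fun x hx => le_csSup hbdd hx
      _ = ENNReal.ofReal (cdf ν (sSup S)) := (ofReal_cdf ν _).symm
      _ ≤ ENNReal.ofReal c := ENNReal.ofReal_le_ofReal hmem
  · rcases le_or_gt c 0 with hc0 | hc0
    · simp [ENNReal.ofReal_eq_zero.2 hc0]
    obtain ⟨a, ha⟩ :=
      eventually_atBot.1 ((tendsto_cdf_atBot ν).eventually (eventually_lt_nhds hc0))
    obtain ⟨x, hx⟩ := intermediate_value_univ a b continuous_cdf
      ⟨(ha a le_rfl).le, (hb b le_rfl).le⟩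
    calc ENNReal.ofReal c = ν (Iic x) := by rw [← ofReal_cdf, hx]
      _ ≤ ν S := measure_mono fun y hy => (monotone_cdf ν hy).trans hx.le

theorem map_cdf_eq_volume_Ioo : ν.map (cdf ν) = volume.restrict (Ioo 0 1) := by
  have : IsProbabilityMeasure (ν.map (cdf ν)) :=
    Measure.isProbabilityMeasure_map (monotone_cdf ν).measurable.aemeasurable
  refine Measure.ext_of_Iic _ _ fun c => ?_
  rw [Measure.map_apply (monotone_cdf ν).measurable measurableSet_Iic,
    Measure.restrict_apply measurableSet_Iic]
  rcases lt_or_ge c 1 with hc | hc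
  · have : Iic c ∩ Ioo 0 1 = Ioc 0 c := by
      ext p
      simp only [mem_inter_iff, mem_Iic, mem_Ioo, mem_Ioc]
      exact ⟨fun ⟨h, h0, _⟩ => ⟨h0, h⟩, fun ⟨h0, h⟩ => ⟨h, h0, h.trans_lt hc⟩⟩
    rw [this, Real.volume_Ioc, sub_zero]
    exact measure_setOf_cdf_le hc.le
  · have : cdf ν ⁻¹' Iic c = univ := eq_univ_of_forall fun x => (cdf_le_one ν x).trans hc
    rw [this, inter_eq_right.2 fun p hp => hp.2.le.trans hc]
    simp

end Quantile

section Coupling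

variable {Ω' : Type*} [MeasurableSpace Ω'] {μ' : Measure Ω'} {X : Ω' → ℝ}
  {ν ν' : Measure ℝ} [IsProbabilityMeasure ν'] [NullSingletonClass ν']

lemma ae_cdf_mem_Ioo : ∀ᵐ x ∂ν', cdf ν' x ∈ Ioo 0 1 :=
  ae_of_ae_map (monotone_cdf ν').measurable.aemeasurable
    (by rw [map_cdf_eq_volume_Ioo]; exact ae_restrict_mem measurableSet_Ioo)

/-- If `cdf ν'` is constant on `[y, x]`, then `x` lies in one of the sets
`{cdf ν' ≤ cdf ν' q} \ Iic q` with `q` rational, which are null since both sets in the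
difference have measure `cdf ν' q`. -/
lemma ae_cdf_lt_of_lt : ∀ᵐ x ∂ν', ∀ y < x, cdf ν' y < cdf ν' x := by
  have hflat (q : ℚ) : ν' ({x | cdf ν' x ≤ cdf ν' q} \ Iic (q : ℝ)) = 0 := by
    have hsub : Iic (q : ℝ) ⊆ {x | cdf ν' x ≤ cdf ν' q} := fun x hx => monotone_cdf ν' hx
    rw [measure_sdiff hsub measurableSet_Iic.nullMeasurableSet (measure_ne_top _ _),
      measure_setOf_cdf_le (cdf_le_one ν' _), ofReal_cdf, tsub_self]
  refine measure_mono_null (fun x hx => ?_) (measure_iUnion_null hflat)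
  obtain ⟨y, hyx, hxy⟩ : ∃ y < x, cdf ν' x ≤ cdf ν' y := by simpa using hx
  obtain ⟨q, hyq, hqx⟩ := exists_rat_btwn hyx
  exact mem_iUnion.2 ⟨q, hxy.trans (monotone_cdf ν' hyq.le), not_le.2 hqx⟩

lemma aemeasurable_quantile_comp_cdf : AEMeasurable (quantile ν ∘ cdf ν') ν' :=
  AEMeasurable.comp_aemeasurable (by rw [map_cdf_eq_volume_Ioo]; exact aemeasurable_quantile)
    (monotone_cdf ν').measurable.aemeasurable

theorem map_quantile_comp_cdf [IsProbabilityMeasure ν] : ν'.map (quantile ν ∘ cdf ν') = ν := by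
  rw [← AEMeasurable.map_map_of_aemeasurable
      (by rw [map_cdf_eq_volume_Ioo]; exact aemeasurable_quantile)
      (monotone_cdf ν').measurable.aemeasurable,
    map_cdf_eq_volume_Ioo, map_quantile_volume_Ioo]

lemma aemeasurable_quantile_cdf_comp (hX : AEMeasurable X μ') (hlaw : μ'.map X = ν') :
    AEMeasurable (fun ω => quantile ν (cdf ν' (X ω))) μ' :=
  AEMeasurable.comp_aemeasurable (g := quantile ν ∘ cdf ν')
    (by rw [hlaw]; exact aemeasurable_quantile_comp_cdf) hX

lemma ae_quantile_cdf_comp_le (hX : AEMeasurable X μ') (hlaw : μ'.map X = ν')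
    (hle : ∀ y, cdf ν' y ≤ cdf ν y) : ∀ᵐ ω ∂μ', quantile ν (cdf ν' (X ω)) ≤ X ω := by
  refine ae_of_ae_map (p := fun x => quantile ν (cdf ν' x) ≤ x) hX ?_
  rw [hlaw]
  exact ae_cdf_mem_Ioo.mono fun x hx => (quantile_le_iff hx).2 (hle x)

lemma ae_le_quantile_cdf_comp (hX : AEMeasurable X μ') (hlaw : μ'.map X = ν')
    (hle : ∀ y, cdf ν y ≤ cdf ν' y) : ∀ᵐ ω ∂μ', X ω ≤ quantile ν (cdf ν' (X ω)) := by
  refine ae_of_ae_map (p := fun x => x ≤ quantile ν (cdf ν' x)) hX ?_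
  rw [hlaw]
  filter_upwards [ae_cdf_mem_Ioo, ae_cdf_lt_of_lt] with x hx hstrict
  by_contra! h
  exact (hstrict _ h).not_ge ((le_cdf_quantile hx).trans (hle _))

end Coupling

lemma iIndepFun.map_fun_eq_of_forall_map_eq {ι Ω Ω' : Type*} [Countable ι] {𝓧 : ι → Type*}
    [∀ i, MeasurableSpace (𝓧 i)] [MeasurableSpace Ω] [MeasurableSpace Ω']
    {μ : Measure Ω} {μ' : Measure Ω'} {X : Π i, Ω → 𝓧 i} {Y : Π i, Ω' → 𝓧 i}
    (hX : ∀ i, AEMeasurable (X i) μ) (hY : ∀ i, AEMeasurable (Y i) μ')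
    (hiX : iIndepFun X μ) (hiY : iIndepFun Y μ') (hmarg : ∀ i, μ.map (X i) = μ'.map (Y i)) :
    μ.map (fun ω i => X i ω) = μ'.map (fun ω i => Y i ω) := by
  rw [hiX.map_fun_eq_infinitePi_map₀' hX, hiY.map_fun_eq_infinitePi_map₀' hY, funext hmarg]

theorem iIndepFun.map_fun_quantile_cdf_comp {ι Ω Ω' : Type*} [Countable ι] [MeasurableSpace Ω]
    [MeasurableSpace Ω'] {μ : Measure Ω} {μ' : Measure Ω'} {ν ν' : ι → Measure ℝ}
    [∀ i, IsProbabilityMeasure (ν i)] [∀ i, IsProbabilityMeasure (ν' i)]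
    [∀ i, NullSingletonClass (ν' i)] {X : ι → Ω' → ℝ} {Z : ι → Ω → ℝ}
    (hX : ∀ i, AEMeasurable (X i) μ') (hiX : iIndepFun X μ') (hXlaw : ∀ i, μ'.map (X i) = ν' i)
    (hZ : ∀ i, AEMeasurable (Z i) μ) (hiZ : iIndepFun Z μ) (hZlaw : ∀ i, μ.map (Z i) = ν i) :
    μ'.map (fun ω i => quantile (ν i) (cdf (ν' i) (X i ω))) = μ.map (fun ω i => Z i ω) := by
  have hR (i : ι) : AEMeasurable (quantile (ν i) ∘ cdf (ν' i)) (μ'.map (X i)) := by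
    rw [hXlaw i]
    exact aemeasurable_quantile_comp_cdf
  refine (hiX.comp₀ _ hX hR).map_fun_eq_of_forall_map_eq
    (fun i => aemeasurable_quantile_cdf_comp (hX i) (hXlaw i)) hZ hiZ fun i => ?_
  change μ'.map ((quantile (ν i) ∘ cdf (ν' i)) ∘ X i) = _
  rw [← AEMeasurable.map_map_of_aemeasurable (hR i) (hX i), hXlaw i, map_quantile_comp_cdf,
    hZlaw i]

section Gamma

instance (a r : ℝ) : NullSingletonClass (gammaMeasure a r) := by
  unfold gammaMeasure
  infer_instance

variable {a y : ℝ}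

lemma integrable_gammaPDFReal (ha : 0 < a) : Integrable (gammaPDFReal a 1) := by
  refine ⟨(measurable_gammaPDFReal _ _).aestronglyMeasurable, ?_⟩
  rw [hasFiniteIntegral_iff_ofReal (ae_of_all _ (gammaPDFReal_nonneg ha one_pos))]
  exact (lintegral_gammaPDF_eq_one ha one_pos).trans_lt one_lt_top

lemma cdf_gammaMeasure_of_nonpos (ha : 0 < a) (hy : y ≤ 0) : cdf (gammaMeasure a 1) y = 0 := by
  rw [cdf_gammaMeasure_eq_lintegral ha one_pos, ← setLIntegral_congr Iio_ae_eq_Iic,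
    lintegral_gammaPDF_of_nonpos hy, toReal_zero]

lemma cdf_gammaMeasure_eq_intervalIntegral (ha : 0 < a) (y : ℝ) :
    cdf (gammaMeasure a 1) y = ∫ x in 0..y, gammaPDFReal a 1 x := by
  rw [← intervalIntegral.integral_Iic_sub_Iic (integrable_gammaPDFReal ha).integrableOn
    (integrable_gammaPDFReal ha).integrableOn, ← cdf_gammaMeasure_eq_integral ha one_pos,
    ← cdf_gammaMeasure_eq_integral ha one_pos, cdf_gammaMeasure_of_nonpos ha le_rfl, sub_zero]

lemma hasDerivAt_rpow_mul_exp_div_Gamma (ha : 0 < a) {x : ℝ} (hx : 0 < x) :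
    HasDerivAt (fun y => y ^ a * Real.exp (-y) / Real.Gamma (a + 1))
      (gammaPDFReal a 1 x - gammaPDFReal (a + 1) 1 x) x := by
  have hpow := Real.hasDerivAt_rpow_const (p := a) (Or.inl hx.ne')
  have hexp : HasDerivAt (fun y => Real.exp (-y)) (-Real.exp (-x)) x := by
    simpa using (hasDerivAt_neg x).exp
  refine ((hpow.mul hexp).div_const (Real.Gamma (a + 1))).congr_deriv ?_
  have hxa : x ^ a = x ^ (a - 1) * x := by rw [← Real.rpow_add_one hx.ne', sub_add_cancel]
  simp only [gammaPDFReal, if_pos hx.le, Real.one_rpow, one_mul, add_sub_cancel_right,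
    Real.Gamma_add_one ha.ne', hxa]
  field_simp
  ring

lemma cdf_gammaMeasure_add_one_le (ha : 0 < a) (y : ℝ) :
    cdf (gammaMeasure (a + 1) 1) y ≤ cdf (gammaMeasure a 1) y := by
  have ha1 : 0 < a + 1 := by linarith
  rcases le_or_gt y 0 with hy | hy
  · rw [cdf_gammaMeasure_of_nonpos ha hy, cdf_gammaMeasure_of_nonpos ha1 hy]
  have hint {b : ℝ} (hb : 0 < b) : IntervalIntegrable (gammaPDFReal b 1) volume 0 y :=
    (integrable_gammaPDFReal hb).intervalIntegrable
  rw [← sub_nonneg, cdf_gammaMeasure_eq_intervalIntegral ha,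
    cdf_gammaMeasure_eq_intervalIntegral ha1, ← intervalIntegral.integral_sub (hint ha) (hint ha1),
    intervalIntegral.integral_eq_sub_of_hasDerivAt_of_le hy.le ?_
      (fun x hx => hasDerivAt_rpow_mul_exp_div_Gamma ha hx.1) ((hint ha).sub (hint ha1)),
    Real.zero_rpow ha.ne', zero_mul, zero_div, sub_zero]
  · positivity
  · exact ((Real.continuous_rpow_const ha.le).mul (by fun_prop)).continuousOn.div_const _

lemma cdf_gammaMeasure_le_of_le {k k' : ℕ} (hk' : 0 < k') (hk : k' ≤ k) (y : ℝ) :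
    cdf (gammaMeasure k 1) y ≤ cdf (gammaMeasure k' 1) y := by
  induction k, hk using Nat.le_induction with
  | base => exact le_rfl
  | succ n hn ih =>
    push_cast
    exact (cdf_gammaMeasure_add_one_le (by exact_mod_cast hk'.trans_le hn) y).trans ih

end Gamma

end ProbabilityTheory

section Covering

variable {Ω Ω' : Type*} {P : ℕ → ℝ} {x : ℕ → EuclideanSpace ℝ (Fin 2)} {α : ℝ} {β : ℕ → ℝ}
  {h g h₂ g₂ : ℕ → Ω → ℝ} {ω : Ω}

lemma SIR_mono (hP : ∀ n, 0 ≤ P n) {n : ℕ} (hh : h n ω ≤ h₂ n ω) (hg : ∀ m, g₂ m ω ≤ g m ω) :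
    SIR P x α h g n ω ≤ SIR P x α h₂ g₂ n ω := by
  refine ENNReal.div_le_div (ENNReal.ofReal_le_ofReal ?_) (ENNReal.tsum_le_tsum fun m => ?_)
  · gcongr
    exact hP n
  · split_ifs
    · exact le_rfl
    · exact ENNReal.ofReal_le_ofReal (by gcongr; exacts [hP m, hg m])

lemma numCovering_mono (hP : ∀ n, 0 ≤ P n) (hh : ∀ n, h n ω ≤ h₂ n ω)
    (hg : ∀ n, g₂ n ω ≤ g n ω) : numCovering P x α β h g ω ≤ numCovering P x α β h₂ g₂ ω := by
  refine ENNReal.tsum_le_tsum fun n => ?_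
  by_cases hn : ENNReal.ofReal (β n) < SIR P x α h g n ω
  · have hn₂ := hn.trans_le (SIR_mono hP (hh n) hg)
    simp only [indicator, mem_ofPred_eq, if_pos hn, if_pos hn₂, le_rfl]
  · simp only [indicator, mem_ofPred_eq, if_neg hn]
    exact zero_le

variable [MeasurableSpace Ω] [MeasurableSpace Ω']

lemma measurable_numCovering (hh : ∀ n, Measurable (h n)) (hg : ∀ n, Measurable (g n)) :
    Measurable (numCovering P x α β h g) := by
  have hSIR (n : ℕ) : Measurable (SIR P x α h g n) := by
    refine (ENNReal.measurable_ofReal.comp (by fun_prop)).div (Measurable.tsum fun m => ?_)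
    split_ifs
    · exact measurable_const
    · exact ENNReal.measurable_ofReal.comp (by fun_prop)
  exact Measurable.tsum fun n =>
    measurable_const.indicator (measurableSet_lt measurable_const (hSIR n))

lemma measure_numCovering_preimage_congr {μ : Measure Ω} {μ' : Measure Ω'}
    {X : ℕ ⊕ ℕ → Ω → ℝ} {X' : ℕ ⊕ ℕ → Ω' → ℝ}
    (hX : ∀ i, AEMeasurable (X i) μ) (hX' : ∀ i, AEMeasurable (X' i) μ')
    (hlaw : μ.map (fun ω i => X i ω) = μ'.map (fun ω i => X' i ω))
    {s : Set ℝ≥0∞} (hs : MeasurableSet s) :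
    μ (numCovering P x α β (X ∘ .inl) (X ∘ .inr) ⁻¹' s) =
      μ' (numCovering P x α β (X' ∘ .inl) (X' ∘ .inr) ⁻¹' s) := by
  set Φ := numCovering P x α β (fun n (f : ℕ ⊕ ℕ → ℝ) => f (.inl n)) (fun n f => f (.inr n))
  have hΦ : Measurable Φ :=
    measurable_numCovering (fun n => measurable_pi_apply _) (fun n => measurable_pi_apply _)
  have hfactor : numCovering P x α β (X ∘ .inl) (X ∘ .inr) = Φ ∘ fun ω i => X i ω := rfl
  have hfactor' : numCovering P x α β (X' ∘ .inl) (X' ∘ .inr) = Φ ∘ fun ω i => X' i ω := rfl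
  rw [hfactor, hfactor', preimage_comp, preimage_comp,
    ← Measure.map_apply_of_aemeasurable (aemeasurable_pi_lambda _ hX) (hΦ hs), hlaw,
    Measure.map_apply_of_aemeasurable (aemeasurable_pi_lambda _ hX') (hΦ hs)]

end Covering

theorem numCovering_stochastic_dominance_general
    (α : ℝ)
    (x : ℕ → EuclideanSpace ℝ (Fin 2))
    (P : ℕ → ℝ) (hP : ∀ n, 0 < P n)
    (β : ℕ → ℝ)
    (Δ Ψ Δ' Ψ' : ℕ → ℕ)
    (hΔpos : ∀ n, 0 < Δ n) (hΨpos : ∀ n, 0 < Ψ n)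
    (hΔ'pos : ∀ n, 0 < Δ' n) (hΨ'pos : ∀ n, 0 < Ψ' n)
    (hΔ : ∀ n, Δ' n ≤ Δ n) (hΨ : ∀ n, Ψ n ≤ Ψ' n)
    {Ω : Type*} [MeasurableSpace Ω] (μ : Measure Ω) [IsProbabilityMeasure μ]
    {Ω' : Type*} [MeasurableSpace Ω'] (μ' : Measure Ω') [IsProbabilityMeasure μ']
    (h g : ℕ → Ω → ℝ) (h' g' : ℕ → Ω' → ℝ)
    (hhm : ∀ n, Measurable (h n)) (hgm : ∀ n, Measurable (g n))
    (hh'm : ∀ n, Measurable (h' n)) (hg'm : ∀ n, Measurable (g' n))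
    (hindep : iIndepFun
      (Sum.elim h g) μ)
    (hindep' : iIndepFun
      (Sum.elim h' g') μ')
    (hhd : ∀ n, Measure.map (h n) μ = gammaMeasure (Δ n) 1)
    (hgd : ∀ n, Measure.map (g n) μ = gammaMeasure (Ψ n) 1)
    (hh'd : ∀ n, Measure.map (h' n) μ' = gammaMeasure (Δ' n) 1)
    (hg'd : ∀ n, Measure.map (g' n) μ' = gammaMeasure (Ψ' n) 1) :
    ∀ t : ℕ, μ' {ω | (t : ℝ≥0∞) < numCovering P x α β h' g' ω} ≤
      μ {ω | (t : ℝ≥0∞) < numCovering P x α β h g ω} := by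
  intro t
  have (i : ℕ ⊕ ℕ) : IsProbabilityMeasure (gammaMeasure (Sum.elim Δ Ψ i : ℕ) 1) :=
    isProbabilityMeasure_gammaMeasure (by cases i <;> simp [hΔpos, hΨpos]) one_pos
  have (i : ℕ ⊕ ℕ) : IsProbabilityMeasure (gammaMeasure (Sum.elim Δ' Ψ' i : ℕ) 1) :=
    isProbabilityMeasure_gammaMeasure (by cases i <;> simp [hΔ'pos, hΨ'pos]) one_pos
  have hmeas : ∀ i, Measurable (Sum.elim h g i) := Sum.forall.2 ⟨hhm, hgm⟩
  have hmeas' : ∀ i, Measurable (Sum.elim h' g' i) := Sum.forall.2 ⟨hh'm, hg'm⟩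
  have hlaw : ∀ i, μ.map (Sum.elim h g i) = gammaMeasure (Sum.elim Δ Ψ i : ℕ) 1 :=
    Sum.forall.2 ⟨hhd, hgd⟩
  have hlaw' : ∀ i, μ'.map (Sum.elim h' g' i) = gammaMeasure (Sum.elim Δ' Ψ' i : ℕ) 1 :=
    Sum.forall.2 ⟨hh'd, hg'd⟩
  set Y : ℕ ⊕ ℕ → Ω' → ℝ := fun i ω => quantile (gammaMeasure (Sum.elim Δ Ψ i : ℕ) 1)
    (cdf (gammaMeasure (Sum.elim Δ' Ψ' i : ℕ) 1) (Sum.elim h' g' i ω))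
  have hjoint : μ.map (fun ω i => Sum.elim h g i ω) = μ'.map (fun ω i => Y i ω) :=
    (hindep'.map_fun_quantile_cdf_comp (fun i => (hmeas' i).aemeasurable) hlaw'
      (fun i => (hmeas i).aemeasurable) hindep hlaw).symm
  have hh_le : ∀ᵐ ω ∂μ', ∀ n, h' n ω ≤ Y (.inl n) ω := ae_all_iff.2 fun n =>
    ae_le_quantile_cdf_comp (hmeas' (.inl n)).aemeasurable (hlaw' (.inl n))
      (cdf_gammaMeasure_le_of_le (hΔ'pos n) (hΔ n))
  have hg_le : ∀ᵐ ω ∂μ', ∀ n, Y (.inr n) ω ≤ g' n ω := ae_all_iff.2 fun n =>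
    ae_quantile_cdf_comp_le (hmeas' (.inr n)).aemeasurable (hlaw' (.inr n))
      (cdf_gammaMeasure_le_of_le (hΨpos n) (hΨ n))
  calc μ' {ω | (t : ℝ≥0∞) < numCovering P x α β h' g' ω}
      ≤ μ' {ω | (t : ℝ≥0∞) < numCovering P x α β (Y ∘ .inl) (Y ∘ .inr) ω} := by
        refine measure_mono_ae ?_
        filter_upwards [hh_le, hg_le] with ω hωh hωg hω
        exact hω.trans_le (numCovering_mono (fun n => (hP n).le) hωh hωg)
    _ = μ {ω | (t : ℝ≥0∞) < numCovering P x α β h g ω} :=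
        (measure_numCovering_preimage_congr (X := Sum.elim h g) (fun i => (hmeas i).aemeasurable)
          (fun i => aemeasurable_quantile_cdf_comp (hmeas' i).aemeasurable (hlaw' i)) hjoint
          measurableSet_Ioi).symm

/-- Ordering of the number of covering base stations: larger direct-link shapes `Δ` and
smaller interfering shapes `Ψ` give a stochastically larger number of covering base stations. -/
theorem numCovering_stochastic_dominance
    (α : ℝ) (hα : 2 < α)
    (x : ℕ → EuclideanSpace ℝ (Fin 2)) (hx : ∀ n, x n ≠ 0)
    (P : ℕ → ℝ) (hP : ∀ n, 0 < P n)
    (β : ℕ → ℝ) (hβ : ∀ n, 0 < β n)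
    (Δ Ψ Δ' Ψ' : ℕ → ℕ)
    (hΔpos : ∀ n, 0 < Δ n) (hΨpos : ∀ n, 0 < Ψ n)
    (hΔ'pos : ∀ n, 0 < Δ' n) (hΨ'pos : ∀ n, 0 < Ψ' n)
    (hΔ : ∀ n, Δ' n ≤ Δ n) (hΨ : ∀ n, Ψ n ≤ Ψ' n)
    {Ω : Type*} [MeasurableSpace Ω] (μ : Measure Ω) [IsProbabilityMeasure μ]
    {Ω' : Type*} [MeasurableSpace Ω'] (μ' : Measure Ω') [IsProbabilityMeasure μ']
    (h g : ℕ → Ω → ℝ) (h' g' : ℕ → Ω' → ℝ)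
    (hhm : ∀ n, Measurable (h n)) (hgm : ∀ n, Measurable (g n))
    (hh'm : ∀ n, Measurable (h' n)) (hg'm : ∀ n, Measurable (g' n))
    (hindep : iIndepFun
      (Sum.elim h g) μ)
    (hindep' : iIndepFun
      (Sum.elim h' g') μ')
    (hhd : ∀ n, Measure.map (h n) μ = gammaMeasure (Δ n) 1)
    (hgd : ∀ n, Measure.map (g n) μ = gammaMeasure (Ψ n) 1)
    (hh'd : ∀ n, Measure.map (h' n) μ' = gammaMeasure (Δ' n) 1)
    (hg'd : ∀ n, Measure.map (g' n) μ' = gammaMeasure (Ψ' n) 1) :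
    ∀ t : ℕ, μ' {ω | (t : ℝ≥0∞) < numCovering P x α β h' g' ω} ≤
      μ {ω | (t : ℝ≥0∞) < numCovering P x α β h g ω} :=
  numCovering_stochastic_dominance_general α x P hP β Δ Ψ Δ' Ψ' hΔpos hΨpos hΔ'pos hΨ'pos hΔ hΨ μ μ'
    h g h' g' hhm hgm hh'm hg'm hindep hindep' hhd hgd hh'd hg'd
end

section
/- For every real number α > 2, the ratio of the area spectral efficiency of full SDMA with M antennas to that of SISO, which equals M · C(α, 1) / C(α, M), satisfies lim_{M → ∞} [ M · C(α, 1) / C(α, M) ] / M^{1 − 2/α} = Γ(1 + 2/α), where the limit is over positive integers M and Γ is the Gamma function. -/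
open MeasureTheory Real Filter

/-- Euler's Beta function `B(a, b) = ∫_0^1 t^(a-1) (1-t)^(b-1) dt`. -/
noncomputable def betaFn (a b : ℝ) : ℝ :=
  ∫ t in (0:ℝ)..1, t ^ (a - 1) * (1 - t) ^ (b - 1)

/-- The constant `C(α, Ψ) = (2π/α) Σ_{m=1}^{Ψ} binom(Ψ,m) B(Ψ - m + 2/α, m - 2/α)`. -/
noncomputable def Cfun (α : ℝ) (Ψ : ℕ) : ℝ :=
  (2 * π / α) * ∑ m ∈ Finset.Icc 1 Ψ,
    (Ψ.choose m : ℝ) * betaFn ((Ψ : ℝ) - m + 2 / α) ((m : ℝ) - 2 / α)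

/-! With `s = 2/α`, the identity `B(a, b) = Γ(a) Γ(b) / Γ(a + b)` puts every term of `C(α, M)` over
`Γ(M)`, and the numerators `Σ binom(M, m) Γ(M - m + s) Γ(m - s)` form a Chu–Vandermonde sum for the
rising factorials of `s` and `-s`: with the `m = 0` term included it equals `Γ(s) Γ(-s) (0)_M = 0`.
Hence `C(α, M) = π Γ(1 - s) Γ(M + s) / Γ(M)`, the normalized ratio is
`Γ(1 + s) · Γ(M) M^s / Γ(M + s)`, and `Γ(M) M^s / Γ(M + s) → 1` is Euler's limit formula for `Γ(s)`. -/

open Finset Polynomial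

theorem ascPochhammer_eval_add {R : Type*} [CommSemiring R] (x y : R) (n : ℕ) :
    (ascPochhammer R n).eval (x + y) = ∑ ij ∈ antidiagonal n,
      (n.choose ij.1 : R) * ((ascPochhammer R ij.1).eval x * (ascPochhammer R ij.2).eval y) := by
  induction n with
  | zero => simp
  | succ n ih =>
    rw [sum_antidiagonal_choose_succ_mul
      (fun i j => (ascPochhammer R i).eval x * (ascPochhammer R j).eval y),
      ascPochhammer_succ_eval, ih, sum_mul, ← sum_add_distrib]
    refine sum_congr rfl fun ij hij => ?_
    rw [HasAntidiagonal.mem_antidiagonal] at hij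
    rw [Nat.choose_symm_of_eq_add hij.symm, ascPochhammer_succ_eval, ascPochhammer_succ_eval, ← hij]
    push_cast
    ring

theorem ascPochhammer_eval_eq_prod_range {R : Type*} [CommSemiring R] (r : R) (n : ℕ) :
    (ascPochhammer R n).eval r = ∏ j ∈ range n, (r + j) := by
  induction n with
  | zero => simp
  | succ n ih => rw [ascPochhammer_succ_eval, ih, prod_range_succ]

namespace Real

theorem ne_neg_natCast_of_pos {x : ℝ} (hx : 0 < x) (k : ℕ) : x ≠ -k := by
  linarith [k.cast_nonneg (α := ℝ)]

theorem Gamma_add_nat_eq_mul_ascPochhammer {x : ℝ} (hx : ∀ k : ℕ, x ≠ -k) (n : ℕ) :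
    Gamma (x + n) = Gamma x * (ascPochhammer ℝ n).eval x := by
  induction n with
  | zero => simp
  | succ n ih =>
    have hxn : x + n ≠ 0 := fun h => hx n (eq_neg_of_add_eq_zero_left h)
    rw [Nat.cast_succ, ← add_assoc, Gamma_add_one hxn, ih, ascPochhammer_succ_eval]
    ring

theorem sum_antidiagonal_choose_mul_Gamma_mul_Gamma {x y : ℝ} (hx : ∀ k : ℕ, x ≠ -k)
    (hy : ∀ k : ℕ, y ≠ -k) (n : ℕ) :
    ∑ ij ∈ antidiagonal n, (n.choose ij.1 : ℝ) * (Gamma (x + ij.1) * Gamma (y + ij.2)) =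
      Gamma x * Gamma y * (ascPochhammer ℝ n).eval (x + y) := by
  simp only [Gamma_add_nat_eq_mul_ascPochhammer hx, Gamma_add_nat_eq_mul_ascPochhammer hy,
    ascPochhammer_eval_add, mul_sum]
  refine sum_congr rfl fun ij _ => ?_
  ring

-- Euler's limit formula `GammaSeq s n → Γ(s)`, shifted by `Γ(n + 1 + s) = (n + s) Γ(n + s)`.
theorem tendsto_Gamma_mul_rpow_div_Gamma_add {s : ℝ} (hs : 0 < s) :
    Tendsto (fun n : ℕ => Gamma n * (n : ℝ) ^ s / Gamma (n + s)) atTop (nhds 1) := by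
  have hGs : Gamma s ≠ 0 := (Gamma_pos_of_pos hs).ne'
  have hseq : Tendsto (fun n : ℕ => GammaSeq s n / Gamma s) atTop (nhds 1) := by
    simpa [div_self hGs] using (GammaSeq_tendsto_Gamma s).div_const (Gamma s)
  have hshift : Tendsto (fun n : ℕ => 1 + s / n) atTop (nhds 1) := by
    simpa using tendsto_const_nhds.add (tendsto_const_div_atTop_nhds_zero_nat s)
  have hlim := hseq.mul hshift
  rw [one_mul] at hlim
  refine hlim.congr' ?_
  filter_upwards [eventually_ne_atTop 0] with n hn
  have hn' : (n : ℝ) ≠ 0 := Nat.cast_ne_zero.2 hn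
  have hprod : ∏ j ∈ range (n + 1), (s + j) = (s + n) * Gamma (n + s) / Gamma s := by
    rw [← ascPochhammer_eval_eq_prod_range, ascPochhammer_succ_eval,
      ← mul_div_cancel_left₀ ((ascPochhammer ℝ n).eval s) hGs,
      ← Gamma_add_nat_eq_mul_ascPochhammer (ne_neg_natCast_of_pos hs), add_comm s]
    ring
  have hGn : Gamma (n + s) ≠ 0 := (Gamma_pos_of_pos (by positivity)).ne'
  rw [GammaSeq, hprod, ← Gamma_nat_eq_factorial, Gamma_add_one hn']
  field_simp
  ring

end Real

theorem betaFn_eq_Gamma_mul_Gamma_div_Gamma {a b : ℝ} (ha : 0 < a) (hb : 0 < b) :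
    betaFn a b = Gamma a * Gamma b / Gamma (a + b) := by
  have h := Complex.Gamma_mul_Gamma_eq_betaIntegral (s := a) (t := b)
    (by simpa using ha) (by simpa using hb)
  have hbeta : Complex.betaIntegral a b = (betaFn a b : ℂ) := by
    rw [Complex.betaIntegral, betaFn, ← intervalIntegral.integral_ofReal]
    refine intervalIntegral.integral_congr fun t ht => ?_
    rw [Set.uIcc_of_le zero_le_one] at ht
    push_cast
    rw [Complex.ofReal_cpow ht.1, Complex.ofReal_cpow (sub_nonneg.2 ht.2)]
    push_cast
    ring
  rw [hbeta, ← Complex.ofReal_add, Complex.Gamma_ofReal, Complex.Gamma_ofReal,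
    Complex.Gamma_ofReal, ← Complex.ofReal_mul, ← Complex.ofReal_mul, Complex.ofReal_inj] at h
  rw [h, mul_div_cancel_left₀ _ (Gamma_pos_of_pos (add_pos ha hb)).ne']

theorem sum_Icc_choose_mul_Gamma_mul_Gamma {s : ℝ} (hs₀ : 0 < s) (hs₁ : s < 1) {M : ℕ}
    (hM : M ≠ 0) :
    ∑ m ∈ Icc 1 M, (M.choose m : ℝ) * (Gamma (M - m + s) * Gamma (m - s)) =
      Gamma (1 - s) * Gamma (M + s) / s := by
  have hneg : ∀ k : ℕ, -s ≠ -k := by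
    rintro (_ | k) h
    · simp_all
    · push_cast at h; linarith [k.cast_nonneg (α := ℝ)]
  have hvan := sum_antidiagonal_choose_mul_Gamma_mul_Gamma hneg (ne_neg_natCast_of_pos hs₀) M
  rw [neg_add_cancel, ascPochhammer_eval_zero, if_neg hM, mul_zero,
    Nat.sum_antidiagonal_eq_sum_range_succ
      (fun i j => (M.choose i : ℝ) * (Gamma (-s + i) * Gamma (s + j))),
    Nat.range_succ_eq_Icc_zero, ← insert_Icc_add_one_left_eq_Icc (Nat.zero_le M),
    sum_insert (by simp)] at hvan
  have hterm : ∀ m ∈ Icc 1 M, (M.choose m : ℝ) * (Gamma (M - m + s) * Gamma (m - s)) =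
      (M.choose m : ℝ) * (Gamma (-s + m) * Gamma (s + (M - m : ℕ))) := by
    intro m hm
    rw [Nat.cast_sub (mem_Icc.1 hm).2]
    ring_nf
  have hG : Gamma (1 - s) = -s * Gamma (-s) := by
    rw [sub_eq_neg_add, Gamma_add_one (neg_ne_zero.2 hs₀.ne')]
  rw [sum_congr rfl hterm, eq_div_iff hs₀.ne', hG]
  simp only [Nat.choose_zero_right, Nat.cast_zero, add_zero, Nat.sub_zero, Nat.cast_one, one_mul,
    zero_add, add_comm s (M : ℝ)] at hvan
  linear_combination s * hvan

theorem Cfun_eq_Gamma {α : ℝ} (hα : 2 < α) {M : ℕ} (hM : M ≠ 0) :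
    Cfun α M = π * Gamma (1 - 2 / α) * Gamma (M + 2 / α) / Gamma M := by
  have hα₀ : 0 < α := by linarith
  have hs₀ : 0 < 2 / α := by positivity
  have hs₁ : 2 / α < 1 := (div_lt_one hα₀).2 hα
  have hbeta : ∀ m ∈ Icc 1 M, (M.choose m : ℝ) * betaFn (M - m + 2 / α) (m - 2 / α) =
      (M.choose m : ℝ) * (Gamma (M - m + 2 / α) * Gamma (m - 2 / α)) / Gamma M := by
    intro m hm
    have hm₁ : (1 : ℝ) ≤ m := by exact_mod_cast (mem_Icc.1 hm).1
    have hmM : (m : ℝ) ≤ M := by exact_mod_cast (mem_Icc.1 hm).2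
    rw [betaFn_eq_Gamma_mul_Gamma_div_Gamma (by linarith) (by linarith)]
    ring_nf
  rw [Cfun, sum_congr rfl hbeta, ← sum_div, sum_Icc_choose_mul_Gamma_mul_Gamma hs₀ hs₁ hM]
  field_simp

/-- For `α > 2`, the ASE ratio `M C(α,1)/C(α,M)` satisfies
`[M C(α,1)/C(α,M)] / M^{1 − 2/α} → Γ(1 + 2/α)` as `M → ∞` over positive integers. -/
theorem ASE_ratio_asymptotics (α : ℝ) (hα : 2 < α) :
    Tendsto (fun M : ℕ => ((M : ℝ) * Cfun α 1 / Cfun α M) / (M : ℝ) ^ (1 - 2 / α)) atTop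
      (nhds (Real.Gamma (1 + 2 / α))) := by
  rw [Cfun_eq_Gamma hα one_ne_zero]
  have hs₀ : 0 < 2 / α := div_pos two_pos (by linarith)
  have hs₁ : 2 / α < 1 := (div_lt_one (by linarith)).2 hα
  have hlim := (tendsto_Gamma_mul_rpow_div_Gamma_add hs₀).const_mul (Gamma (1 + 2 / α))
  rw [mul_one] at hlim
  refine hlim.congr' ?_
  filter_upwards [eventually_ne_atTop 0] with M hM
  have hM₀ : (0 : ℝ) < M := by positivity
  rw [Cfun_eq_Gamma hα hM, rpow_sub hM₀, rpow_one, Nat.cast_one, Gamma_one]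
  generalize 2 / α = s at hs₀ hs₁ ⊢
  have hΓ₁ := Gamma_pos_of_pos (sub_pos.2 hs₁)
  have hΓ₂ := Gamma_pos_of_pos (add_pos hM₀ hs₀)
  have hΓ₃ := Gamma_pos_of_pos hM₀
  field_simp
end
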